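/- arXiv:2002.08080 — 5 statements merged into one kernel-verified Lean document; each statement's English description precedes it below -/
import Mathlib

section
/- For λ ≥ 0, define Q(m, λ) = ∑_{j=0}^{m−1} (λ^j / j!) · e^{−λ} for positive integers m. Then for every μ > 0, ∫₀¹ Q(⌊y/μ⌋ + 1, λ) dy = (1 − λμ) · Q(⌈1/μ⌉, λ) + λ^{⌈1/μ⌉} · μ · e^{−λ} / (⌈1/μ⌉ − 1)!, where ⌊·⌋ and ⌈·⌉ denote the floor and ceiling functions and (⌈1/μ⌉ − 1)! = Γ(⌈1/μ⌉). -/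
open MeasureTheory

/-- The regularized upper incomplete gamma function at positive integer first argument `m`,
equal to the Poisson(λ) cumulative distribution function at `m − 1`. -/
noncomputable def Qreg (m : ℕ) (lam : ℝ) : ℝ :=
  ∑ j ∈ Finset.range m, lam ^ j / (j.factorial : ℝ) * Real.exp (-lam)

/-!
On `[iμ, (i+1)μ)` the integrand `y ↦ Q(⌊y/μ⌋ + 1, λ)` is the constant `Q(i+1, λ)`, so the integral
over `(0, 1)` is `μ ∑_{i<m} Q(i+1, λ) + (1 - mμ) Q(m+1, λ)` with `m = ⌈1/μ⌉ - 1`. Summation by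
parts gives `∑_{i<m} Q(i+1, λ) = m Q(m+1, λ) - λ Q(m, λ)`, and the closed form follows from
`Q(m+1, λ) - Q(m, λ) = λ^m e^{-λ} / m!`.
-/

open Set Finset

section FloorStep

variable {E : Type*} (g : ℕ → E) {μ : ℝ}

theorem Nat.floor_div_eq_of_mem_Ioo (hμ : 0 < μ) {i : ℕ} {y : ℝ}
    (hy : y ∈ Ioo (i * μ) ((i + 1) * μ)) : ⌊y / μ⌋₊ = i := by
  have hy0 : 0 ≤ y := (by positivity : (0 : ℝ) ≤ i * μ).trans hy.1.le
  rw [Nat.floor_eq_iff (div_nonneg hy0 hμ.le), le_div_iff₀ hμ, div_lt_iff₀ hμ]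
  exact ⟨hy.1.le, hy.2⟩

theorem eqOn_comp_floor_div (hμ : 0 < μ) {i : ℕ} {a b : ℝ} (ha : i * μ ≤ a)
    (hb : b ≤ (i + 1) * μ) : EqOn (fun y => g ⌊y / μ⌋₊) (fun _ => g i) (Ioo a b) :=
  fun _ hy => congrArg g <| Nat.floor_div_eq_of_mem_Ioo hμ ⟨ha.trans_lt hy.1, hy.2.trans_le hb⟩

variable [NormedAddCommGroup E]

theorem intervalIntegrable_comp_floor_div (hμ : 0 < μ) {i : ℕ} {a b : ℝ} (hab : a ≤ b)
    (ha : i * μ ≤ a) (hb : b ≤ (i + 1) * μ) :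
    IntervalIntegrable (fun y => g ⌊y / μ⌋₊) volume a b := by
  rw [intervalIntegrable_iff_integrableOn_Ioo_of_le hab]
  exact (integrableOn_const measure_Ioo_lt_top.ne).congr_fun
    (eqOn_comp_floor_div g hμ ha hb).symm measurableSet_Ioo

theorem intervalIntegrable_comp_floor_div_nat_mul (hμ : 0 < μ) (i : ℕ) :
    IntervalIntegrable (fun y => g ⌊y / μ⌋₊) volume (i * μ) ((i + 1 : ℕ) * μ) :=
  intervalIntegrable_comp_floor_div g hμ (by gcongr; simp) le_rfl (by push_cast; rfl)

theorem intervalIntegrable_zero_nat_mul_comp_floor_div (hμ : 0 < μ) (n : ℕ) :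
    IntervalIntegrable (fun y => g ⌊y / μ⌋₊) volume 0 (n * μ) := by
  simpa using IntervalIntegrable.trans_iterate (a := fun i : ℕ => (i : ℝ) * μ) (n := n)
    fun i _ => intervalIntegrable_comp_floor_div_nat_mul g hμ i

variable [NormedSpace ℝ E] [CompleteSpace E]

theorem integral_comp_floor_div_of_mem (hμ : 0 < μ) {i : ℕ} {a b : ℝ} (hab : a ≤ b)
    (ha : i * μ ≤ a) (hb : b ≤ (i + 1) * μ) :
    ∫ y in a..b, g ⌊y / μ⌋₊ = (b - a) • g i := by
  rw [intervalIntegral.integral_of_le hab, integral_Ioc_eq_integral_Ioo,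
    setIntegral_congr_fun measurableSet_Ioo (eqOn_comp_floor_div g hμ ha hb), setIntegral_const,
    Real.volume_real_Ioo_of_le hab]

theorem integral_comp_floor_div_nat_mul (hμ : 0 < μ) (i : ℕ) :
    ∫ y in (i * μ)..((i + 1 : ℕ) * μ), g ⌊y / μ⌋₊ = μ • g i := by
  rw [integral_comp_floor_div_of_mem g hμ (by gcongr; simp) le_rfl (by push_cast; rfl)]
  push_cast; ring_nf

theorem integral_zero_nat_mul_comp_floor_div (hμ : 0 < μ) (n : ℕ) :
    ∫ y in (0 : ℝ)..n * μ, g ⌊y / μ⌋₊ = μ • ∑ i ∈ range n, g i := by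
  rw [show (0 : ℝ) = ((0 : ℕ) : ℝ) * μ by simp, ← intervalIntegral.sum_integral_adjacent_intervals
    fun i _ => intervalIntegrable_comp_floor_div_nat_mul g hμ i, Finset.smul_sum]
  exact Finset.sum_congr rfl fun i _ => integral_comp_floor_div_nat_mul g hμ i

theorem integral_zero_comp_floor_div (hμ : 0 < μ) {m : ℕ} {b : ℝ} (hm : m * μ ≤ b)
    (hb : b ≤ (m + 1) * μ) :
    ∫ y in (0 : ℝ)..b, g ⌊y / μ⌋₊ = μ • ∑ i ∈ range m, g i + (b - m * μ) • g m := by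
  rw [← intervalIntegral.integral_add_adjacent_intervals
      (intervalIntegrable_zero_nat_mul_comp_floor_div g hμ m)
      (intervalIntegrable_comp_floor_div g hμ hm le_rfl hb),
    integral_zero_nat_mul_comp_floor_div g hμ, integral_comp_floor_div_of_mem g hμ hm le_rfl hb]

end FloorStep

theorem Qreg_succ (m : ℕ) (lam : ℝ) :
    Qreg (m + 1) lam = Qreg m lam + lam ^ m / (m.factorial : ℝ) * Real.exp (-lam) :=
  Finset.sum_range_succ _ _

theorem sum_range_Qreg_succ (lam : ℝ) (m : ℕ) :
    ∑ i ∈ range m, Qreg (i + 1) lam = m * Qreg (m + 1) lam - lam * Qreg m lam := by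
  induction m with
  | zero => simp [Qreg]
  | succ m ih =>
    rw [Finset.sum_range_succ, ih, Qreg_succ (m + 1), Qreg_succ m, Nat.factorial_succ]
    have : (m.factorial : ℝ) ≠ 0 := Nat.cast_ne_zero.mpr m.factorial_ne_zero
    push_cast
    field_simp
    ring

theorem stmt_9_general (lam μ : ℝ) (hμ : 0 < μ) :
    ∫ y in Set.Ioo (0 : ℝ) 1, Qreg (⌊y / μ⌋₊ + 1) lam
      = (1 - lam * μ) * Qreg ⌈1 / μ⌉₊ lam
        + lam ^ ⌈1 / μ⌉₊ * μ * Real.exp (-lam) / ((⌈1 / μ⌉₊ - 1).factorial : ℝ) := by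
  obtain ⟨m, hm⟩ : ∃ m, ⌈1 / μ⌉₊ = m + 1 :=
    Nat.exists_eq_add_one.mpr (Nat.ceil_pos.mpr (by positivity))
  have hlo : (m : ℝ) * μ ≤ 1 := by
    have := Nat.ceil_lt_add_one (one_div_pos.mpr hμ).le
    rw [hm, Nat.cast_add_one] at this
    exact ((lt_div_iff₀ hμ).mp (by linarith)).le
  have hhi : 1 ≤ ((m : ℝ) + 1) * μ := by
    have := Nat.le_ceil (1 / μ)
    rwa [hm, Nat.cast_add_one, div_le_iff₀ hμ] at this
  rw [← integral_Ioc_eq_integral_Ioo, ← intervalIntegral.integral_of_le zero_le_one,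
    integral_zero_comp_floor_div (fun i => Qreg (i + 1) lam) hμ hlo hhi, smul_eq_mul, smul_eq_mul,
    sum_range_Qreg_succ, hm, Nat.add_sub_cancel, Qreg_succ m, pow_succ]
  have : (m.factorial : ℝ) ≠ 0 := Nat.cast_ne_zero.mpr m.factorial_ne_zero
  field_simp
  ring

/-- Closed form of the integral of the Poisson CDF `y ↦ F_Y(y/μ) = Q(⌊y/μ⌋ + 1, λ)` over `(0,1)`:
`∫₀¹ Q(⌊y/μ⌋+1, λ) dy = (1 − λμ) Q(⌈1/μ⌉, λ) + λ^{⌈1/μ⌉} μ e^{−λ} / (⌈1/μ⌉ − 1)!`. -/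
theorem stmt_9 (lam μ : ℝ) (hlam : 0 ≤ lam) (hμ : 0 < μ) :
    ∫ y in Set.Ioo (0 : ℝ) 1, Qreg (⌊y / μ⌋₊ + 1) lam
      = (1 - lam * μ) * Qreg ⌈1 / μ⌉₊ lam
        + lam ^ ⌈1 / μ⌉₊ * μ * Real.exp (-lam) / ((⌈1 / μ⌉₊ - 1).factorial : ℝ) :=
  stmt_9_general lam μ hμ
end

section
/- Let Y be a Poisson random variable with mean λ ≥ 0 and let μ > 0. Then E[min{1, μY}] = 1 + (λμ − 1) · Q(⌈1/μ⌉, λ) − e^{−λ} · λ^{⌈1/μ⌉} · μ / (⌈1/μ⌉ − 1)!, where Q(m, λ) = ∑_{j=0}^{m−1} (λ^j/j!) e^{−λ}. Equivalently, as a series identity: ∑_{k=0}^{∞} e^{−λ} (λ^k / k!) · min{1, μk} = 1 + (λμ − 1) · ∑_{j=0}^{⌈1/μ⌉−1} (λ^j/j!) e^{−λ} − e^{−λ} λ^{⌈1/μ⌉} μ / (⌈1/μ⌉ − 1)!. -/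
/-- **Theorem 2.** For a Poisson random variable `Y` with mean `λ ≥ 0` and `μ > 0`,
`E[min {1, μ Y}] = 1 + (λμ − 1) Q(⌈1/μ⌉, λ) − e^{−λ} λ^{⌈1/μ⌉} μ / Γ(⌈1/μ⌉)`,
stated as a series identity over the Poisson probability mass function. -/
theorem stmt_10 (lam μ : ℝ) (hlam : 0 ≤ lam) (hμ : 0 < μ) :
    ∑' k : ℕ, Real.exp (-lam) * lam ^ k / (k.factorial : ℝ) * min 1 (μ * (k : ℝ))
      = 1 + (lam * μ - 1) * Qreg ⌈1 / μ⌉₊ lam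
        - Real.exp (-lam) * lam ^ ⌈1 / μ⌉₊ * μ / ((⌈1 / μ⌉₊ - 1).factorial : ℝ) := by
  set m := ⌈1 / μ⌉₊ with hmdef
  set E := Real.exp (-lam) with hE
  set p : ℕ → ℝ := fun k => E * lam ^ k / (k.factorial : ℝ) with hp
  have hm1 : 1 ≤ m := Nat.ceil_pos.mpr (by positivity)
  obtain ⟨n, hn⟩ : ∃ n, m = n + 1 := ⟨m - 1, (Nat.succ_pred_eq_of_pos hm1).symm⟩
  -- min facts
  have hmin_ge : ∀ k, m ≤ k → min 1 (μ * (k : ℝ)) = 1 := by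
    intro k hk
    apply min_eq_left
    have h1 : 1 / μ ≤ (m : ℝ) := Nat.le_ceil _
    have h2 : (m : ℝ) ≤ (k : ℝ) := Nat.cast_le.mpr hk
    rw [div_le_iff₀ hμ] at h1
    nlinarith
  have hmin_lt : ∀ k, k < m → min 1 (μ * (k : ℝ)) = μ * k := by
    intro k hk
    apply min_eq_right
    have h1 : (k : ℝ) < 1 / μ := Nat.lt_ceil.mp hk
    rw [lt_div_iff₀ hμ] at h1
    nlinarith
  -- summability
  have hps : Summable p := by
    have := (Real.summable_pow_div_factorial lam).mul_left E
    simpa [hp, mul_div_assoc] using this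
  have hpt : ∑' k, p k = 1 := by
    have h1 : ∑' k : ℕ, lam ^ k / (k.factorial : ℝ) = Real.exp lam := by
      rw [Real.exp_eq_exp_ℝ, NormedSpace.exp_eq_tsum_div]
    calc ∑' k, p k = E * ∑' k : ℕ, lam ^ k / (k.factorial : ℝ) := by
          simp_rw [hp, mul_div_assoc]; exact tsum_mul_left
      _ = 1 := by rw [h1, hE, ← Real.exp_add]; simp
  set g : ℕ → ℝ := fun k => p k * (1 - min 1 (μ * (k : ℝ))) with hg
  have hg0 : ∀ k ∉ Finset.range m, g k = 0 := by
    intro k hk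
    rw [Finset.mem_range, not_lt] at hk
    simp [hg, hmin_ge k hk]
  have hgs : Summable g := summable_of_ne_finset_zero hg0
  have hsplit : (fun k : ℕ => Real.exp (-lam) * lam ^ k / (k.factorial : ℝ)
      * min 1 (μ * (k : ℝ))) = fun k => p k - g k := by
    funext k; simp only [hg, hp, ← hE]; ring
  rw [hsplit, Summable.tsum_sub hps hgs, hpt, tsum_eq_sum hg0]
  -- finite sums
  have hQ : ∑ k ∈ Finset.range m, p k = Qreg m lam := by
    unfold Qreg
    refine Finset.sum_congr rfl fun k _ => ?_
    rw [hp, hE]; ring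
  have hsum_k : ∑ k ∈ Finset.range m, p k * k
      = lam * (Qreg m lam - lam ^ n / (n.factorial : ℝ) * E) := by
    have hQ' : Qreg (n + 1) lam = (∑ j ∈ Finset.range n, lam ^ j / (j.factorial : ℝ) * E)
        + lam ^ n / (n.factorial : ℝ) * E := by
      unfold Qreg; rw [Finset.sum_range_succ, ← hE]
    rw [hn, Finset.sum_range_succ']
    have : ∀ i : ℕ, p (i + 1) * ((i : ℕ) + 1 : ℕ)
        = lam * (lam ^ i / (i.factorial : ℝ) * E) := by
      intro i
      rw [hp]
      simp only [Nat.factorial_succ, Nat.cast_mul, Nat.cast_add, Nat.cast_one, pow_succ]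
      have h1 : ((i.factorial : ℝ)) ≠ 0 := Nat.cast_ne_zero.mpr i.factorial_ne_zero
      have h2 : ((i : ℝ) + 1) ≠ 0 := by positivity
      field_simp
    rw [Finset.sum_congr rfl fun i _ => this i, ← Finset.mul_sum, hQ']
    simp [hp]
  have hgsum : ∑ k ∈ Finset.range m, g k
      = Qreg m lam - μ * (lam * (Qreg m lam - lam ^ n / (n.factorial : ℝ) * E)) := by
    rw [← hsum_k, ← hQ, Finset.mul_sum, ← Finset.sum_sub_distrib]
    refine Finset.sum_congr rfl fun k hk => ?_
    rw [Finset.mem_range] at hk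
    simp only [hg, hmin_lt k hk]
    ring
  rw [hgsum]
  have hfl : (m - 1).factorial = n.factorial := by rw [hn]; rfl
  have hpow : lam ^ m = lam ^ n * lam := by rw [hn, pow_succ]
  rw [hfl, hpow]
  have h1 : ((n.factorial : ℝ)) ≠ 0 := Nat.cast_ne_zero.mpr n.factorial_ne_zero
  field_simp
  ring
end

section
/- Fix natural numbers B and K, nonnegative reals γ_0, …, γ_B, nonnegative reals F_0, …, F_K with ∑_{j=0}^{K} F_j = 1, a real s > 0, and a real C ≥ 0. Suppose the real numbers μ_0, …, μ_K and ξ_{b,j} (for 0 ≤ b ≤ B, 0 ≤ j ≤ K) satisfy: (i) s · ∑_{j=0}^{K} μ_j F_j ≤ C; (ii) 1 ≥ μ_0 ≥ μ_1 ≥ ⋯ ≥ μ_K ≥ 0; (iii) ξ_{b,j} ≤ 1 for all b, j; and (iv) ξ_{b,j} ≤ b·μ_j for all b, j. Then ∑_{b=0}^{B} γ_b ∑_{j=0}^{K} ξ_{b,j} F_j ≤ ∑_{b=0}^{B} γ_b · min{1, b·C/s}. In particular, the static caching policy μ_j = C/s with ξ_{b,j} = min{1, b·C/s} attains this bound, so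 static caching is an optimal solution of the per-file subproblem. -/
/-- **Lemma 2 (per-file subproblem).** Under the epigraph constraints of the per-file linear
program, every feasible point has objective at most `∑_b γ_b min {1, b C / s}`, and the static
caching policy `μ_j = C/s` with `ξ_{b,j} = min {1, b C / s}` attains this bound. -/
theorem stmt_11 (B K : ℕ) (γ : Fin (B + 1) → ℝ) (F : Fin (K + 1) → ℝ) (s C : ℝ)
    (hγ : ∀ b, 0 ≤ γ b) (hF : ∀ j, 0 ≤ F j) (hFsum : ∑ j, F j = 1)
    (hs : 0 < s) (hC : 0 ≤ C)
    (μ : Fin (K + 1) → ℝ) (ξ : Fin (B + 1) → Fin (K + 1) → ℝ)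
    (hcap : s * ∑ j, μ j * F j ≤ C)
    (hμtop : μ 0 ≤ 1) (hμmono : Antitone μ) (hμbot : 0 ≤ μ (Fin.last K))
    (hξ1 : ∀ b j, ξ b j ≤ 1) (hξ2 : ∀ b j, ξ b j ≤ ((b : ℕ) : ℝ) * μ j) :
    (∑ b, γ b * ∑ j, ξ b j * F j ≤ ∑ b, γ b * min 1 (((b : ℕ) : ℝ) * C / s)) ∧
    (∑ b, γ b * ∑ j, min 1 (((b : ℕ) : ℝ) * C / s) * F j
       = ∑ b, γ b * min 1 (((b : ℕ) : ℝ) * C / s)) := by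
  have hμF : ∑ j, μ j * F j ≤ C / s := by
    rw [le_div_iff₀ hs]
    linarith [hcap]
  constructor
  · apply Finset.sum_le_sum
    intro b _
    apply mul_le_mul_of_nonneg_left _ (hγ b)
    apply le_min
    · calc ∑ j, ξ b j * F j ≤ ∑ j, 1 * F j := by
            apply Finset.sum_le_sum
            intro j _
            exact mul_le_mul_of_nonneg_right (hξ1 b j) (hF j)
        _ = 1 := by simp [hFsum]
    · calc ∑ j, ξ b j * F j ≤ ∑ j, (((b : ℕ) : ℝ) * μ j) * F j := by
            apply Finset.sum_le_sum
            intro j _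
            exact mul_le_mul_of_nonneg_right (hξ2 b j) (hF j)
        _ = ((b : ℕ) : ℝ) * ∑ j, μ j * F j := by
            rw [Finset.mul_sum]; congr 1; ext j; ring
        _ ≤ ((b : ℕ) : ℝ) * (C / s) :=
            mul_le_mul_of_nonneg_left hμF (Nat.cast_nonneg _)
        _ = ((b : ℕ) : ℝ) * C / s := by ring
  · congr 1
    ext b
    rw [← Finset.mul_sum, hFsum, mul_one]
end

section
/- Consider N files, K+1 time slots, and coverage levels b = 0, …, B. Let ω_i > 0 and s_i ≥ 0 for i = 1, …, N, let γ_b ≥ 0 for b = 0, …, B, let F_{i,j} ≥ 0 with ∑_{j=0}^{K} F_{i,j} = 1 for each i, let C ≥ 0, let c_C ≥ 0 (cache update cost) and c_MBS ≥ c_SBS (link costs). For a policy μ = (μ_{i,j}) define the update rate R_C(μ) = B·∑_i ω_i s_i ∑_j (μ_{i,0} − μ_{i,j}) F_{i,j} and the SBS download rate R_SBS(μ) = ∑_{b=0}^{B} γ_b ∑_i ω_i s_i ∑_j min{1, b·μ_{i,j}} F_{i,j}, and the objective J(μ) = c_C·R_C(μ) − (c_MBS − c_SBS)·R_SBS(μ).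 Suppose μ is feasible, i.e., ∑_i s_i ∑_j μ_{i,j} F_{i,j} ≤ C and 1 ≥ μ_{i,0} ≥ μ_{i,1} ≥ ⋯ ≥ μ_{i,K} ≥ 0 for each i. Then the static policy μ′ defined by μ′_{i,j} = ∑_{k=0}^{K} μ_{i,k} F_{i,k} for all j is also feasible and satisfies J(μ′) ≤ J(μ). Hence static caching (policies constant in j) minimizes the network load objective under a Poisson request process. -/
/-- **Theorem 3.** Under a Poisson request process (constant hazard, so the cache constraint is
`∑_i s_i ∑_j μ_{i,j} F_{i,j} ≤ C`), for any feasible policy `μ` the static policy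
`μ'_{i,j} = ∑_k μ_{i,k} F_{i,k}` is feasible and satisfies `J(μ') ≤ J(μ)`, where
`J(ν) = c_C R_C(ν) − (c_MBS − c_SBS) R_SBS(ν)` is the network-load objective. Hence static
caching minimizes the network load. -/
theorem stmt_12 (N K B : ℕ) (ω s : Fin N → ℝ) (γ : Fin (B + 1) → ℝ)
    (F : Fin N → Fin (K + 1) → ℝ) (C cC cMBS cSBS : ℝ)
    (hω : ∀ i, 0 < ω i) (hs : ∀ i, 0 ≤ s i) (hγ : ∀ b, 0 ≤ γ b)
    (hF : ∀ i j, 0 ≤ F i j) (hFsum : ∀ i, ∑ j, F i j = 1)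
    (hC : 0 ≤ C) (hcC : 0 ≤ cC) (hcost : cSBS ≤ cMBS)
    (μ : Fin N → Fin (K + 1) → ℝ)
    (hcap : ∑ i, s i * ∑ j, μ i j * F i j ≤ C)
    (hμtop : ∀ i, μ i 0 ≤ 1) (hμmono : ∀ i, Antitone (μ i))
    (hμbot : ∀ i, 0 ≤ μ i (Fin.last K)) :
    let μ' : Fin N → Fin (K + 1) → ℝ := fun i _ => ∑ k, μ i k * F i k
    let RC : (Fin N → Fin (K + 1) → ℝ) → ℝ := fun ν =>
      (B : ℝ) * ∑ i, ω i * s i * ∑ j, (ν i 0 - ν i j) * F i j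
    let RSBS : (Fin N → Fin (K + 1) → ℝ) → ℝ := fun ν =>
      ∑ b : Fin (B + 1), γ b * ∑ i, ω i * s i * ∑ j, min 1 (((b : ℕ) : ℝ) * ν i j) * F i j
    let J : (Fin N → Fin (K + 1) → ℝ) → ℝ := fun ν => cC * RC ν - (cMBS - cSBS) * RSBS ν
    (∑ i, s i * ∑ j, μ' i j * F i j ≤ C) ∧ (∀ i, μ' i 0 ≤ 1) ∧
    (∀ i, Antitone (μ' i)) ∧ (∀ i, 0 ≤ μ' i (Fin.last K)) ∧ J μ' ≤ J μ := by

  intro μ' RC RSBS J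
  have hμ0 : ∀ i j, 0 ≤ μ i j := fun i j => (hμbot i).trans (hμmono i (Fin.le_last j))
  have hμ1 : ∀ i j, μ i j ≤ 1 := fun i j => (hμmono i (Fin.zero_le j)).trans (hμtop i)
  have hc0 : ∀ i, 0 ≤ ∑ k, μ i k * F i k := fun i =>
    Finset.sum_nonneg fun k _ => mul_nonneg (hμ0 i k) (hF i k)
  have hc1 : ∀ i, ∑ k, μ i k * F i k ≤ 1 := fun i => by
    calc ∑ k, μ i k * F i k ≤ ∑ k, F i k :=
          Finset.sum_le_sum fun k _ => by
            nlinarith [hμ0 i k, hμ1 i k, hF i k]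
      _ = 1 := hFsum i
  have hcapsum : ∀ i, ∑ j, μ' i j * F i j = ∑ k, μ i k * F i k := fun i => by
    simp only [μ']
    rw [← Finset.mul_sum, hFsum i, mul_one]
  refine ⟨?_, fun i => hc1 i, fun i _ _ _ => le_refl _, fun i => hc0 i, ?_⟩
  · calc ∑ i, s i * ∑ j, μ' i j * F i j = ∑ i, s i * ∑ j, μ i j * F i j := by
          refine Finset.sum_congr rfl fun i _ => ?_
          rw [hcapsum i]
      _ ≤ C := hcap
  · -- J μ' ≤ J μ
    have hRC' : RC μ' = 0 := by
      simp [RC, μ']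
    have hRC : 0 ≤ RC μ := by
      apply mul_nonneg (Nat.cast_nonneg B)
      refine Finset.sum_nonneg fun i _ => mul_nonneg (mul_nonneg (hω i).le (hs i)) ?_
      refine Finset.sum_nonneg fun j _ => mul_nonneg ?_ (hF i j)
      have := hμmono i (Fin.zero_le j)
      linarith
    have hRSBS : RSBS μ ≤ RSBS μ' := by
      refine Finset.sum_le_sum fun b _ => mul_le_mul_of_nonneg_left ?_ (hγ b)
      refine Finset.sum_le_sum fun i _ => mul_le_mul_of_nonneg_left ?_
        (mul_nonneg (hω i).le (hs i))
      have hrhs : ∑ j, min 1 (((b : ℕ) : ℝ) * μ' i j) * F i j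
          = min 1 (((b : ℕ) : ℝ) * ∑ k, μ i k * F i k) := by
        simp only [μ']
        rw [← Finset.mul_sum, hFsum i, mul_one]
      rw [hrhs]
      refine le_min ?_ ?_
      · calc ∑ j, min 1 (((b : ℕ) : ℝ) * μ i j) * F i j ≤ ∑ j, F i j :=
              Finset.sum_le_sum fun j _ => by
                have h1 : min 1 (((b : ℕ) : ℝ) * μ i j) ≤ 1 := min_le_left _ _
                nlinarith [hF i j]
          _ = 1 := hFsum i
      · calc ∑ j, min 1 (((b : ℕ) : ℝ) * μ i j) * F i j
            ≤ ∑ j, ((b : ℕ) : ℝ) * μ i j * F i j :=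
              Finset.sum_le_sum fun j _ =>
                mul_le_mul_of_nonneg_right (min_le_right _ _) (hF i j)
          _ = ((b : ℕ) : ℝ) * ∑ k, μ i k * F i k := by
              rw [Finset.mul_sum]; exact Finset.sum_congr rfl fun j _ => by ring
    have h1 : cC * RC μ' ≤ cC * RC μ := by
      rw [hRC', mul_zero]; exact mul_nonneg hcC hRC
    have h2 : (cMBS - cSBS) * RSBS μ ≤ (cMBS - cSBS) * RSBS μ' :=
      mul_le_mul_of_nonneg_left hRSBS (by linarith)
    simp only [J]
    linarith
end

section
/- Single-cache STTL has a greedy 0–1 optimal solution: consider N files and K+1 slots, with ω_i > 0, s_i > 0, F_{i,j} > 0 and A_{i,j} > 0 for all i, j, a budget C ≥ 0, and suppose the hazard ratios F_{i,j}/A_{i,j} are nonincreasing in j for each i. Let S be the feasible set of policies μ = (μ_{i,j}) satisfying ∑_{i=1}^{N} ω_i s_i ∑_{j=0}^{K} μ_{i,j} A_{i,j} ≤ C and 1 ≥ μ_{i,0} ≥ μ_{i,1} ≥ ⋯ ≥ μ_{i,K} ≥ 0 for each i, and let R(μ) = ∑_i ω_i s_i ∑_j μ_{i,j} F_{i,j}.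 Then the maximum of R over S is attained by a policy μ* ∈ S such that μ*_{i,j} ∈ {0, 1} for all pairs (i, j) except at most one pair; in particular the optimal STTL policy is (up to one fractional entry) a TTL policy in which each file is fully cached up to some time and then evicted. -/
open Finset

lemma knap_sttl (M : ℕ) (w v : ℕ → ℝ) (C : ℝ) (hC : 0 ≤ C)
    (hw : ∀ p, 0 < w p) (hv : ∀ p, 0 < v p)
    (hr : ∀ p q : ℕ, p ≤ q → q < M → v q / w q ≤ v p / w p) :
    ∃ g : ℕ → ℝ,
      (∀ p, 0 ≤ g p) ∧ (∀ p, g p ≤ 1) ∧ (∀ p q : ℕ, p ≤ q → g q ≤ g p) ∧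
      (∑ p ∈ range M, w p * g p ≤ C) ∧
      (∀ μ : ℕ → ℝ, (∀ p, 0 ≤ μ p) → (∀ p, μ p ≤ 1) →
        ∑ p ∈ range M, w p * μ p ≤ C →
        ∑ p ∈ range M, v p * μ p ≤ ∑ p ∈ range M, v p * g p) ∧
      (∀ p q : ℕ, ¬(g p = 0 ∨ g p = 1) → ¬(g q = 0 ∨ g q = 1) → p = q) := by
  set S : ℕ → ℝ := fun n => ∑ q ∈ range n, w q with hSdef
  have hS0 : ∀ n, 0 ≤ S n := fun n => Finset.sum_nonneg fun q _ => (hw q).le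
  have hSsucc : ∀ n, S (n + 1) = S n + w n := fun n => Finset.sum_range_succ _ _
  have hSmono : ∀ p q : ℕ, p ≤ q → S p ≤ S q := by
    intro p q hpq
    exact Finset.sum_le_sum_of_subset_of_nonneg (Finset.range_subset_range.2 hpq)
      (fun i _ _ => (hw i).le)
  have hSstep : ∀ p q : ℕ, p < q → S p + w p ≤ S q := by
    intro p q hpq
    rw [← hSsucc]
    exact hSmono _ _ hpq
  set g : ℕ → ℝ := fun n => max 0 (min 1 ((C - S n) / w n)) with hgdef
  have hg0 : ∀ p, 0 ≤ g p := fun p => le_max_left _ _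
  have hg1 : ∀ p, g p ≤ 1 := fun p => max_le zero_le_one (min_le_left _ _)
  have gzero : ∀ n, C ≤ S n → g n = 0 := by
    intro n h
    have hx : (C - S n) / w n ≤ 0 := div_nonpos_iff.2 (Or.inr ⟨by linarith, (hw n).le⟩)
    simp only [hgdef]
    exact max_eq_left ((min_le_right _ _).trans hx)
  have gone : ∀ n, S n + w n ≤ C → g n = 1 := by
    intro n h
    have hx : (1 : ℝ) ≤ (C - S n) / w n := (le_div_iff₀ (hw n)).2 (by linarith)
    simp only [hgdef]
    rw [min_eq_left hx, max_eq_right zero_le_one]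
  have gfrac : ∀ n, ¬(g n = 0 ∨ g n = 1) → S n < C ∧ C < S n + w n := by
    intro n h
    push_neg at h
    constructor
    · by_contra hc
      exact h.1 (gzero n (le_of_not_gt hc))
    · by_contra hc
      exact h.2 (gone n (le_of_not_gt hc))
  have ganti : ∀ p q : ℕ, p ≤ q → g q ≤ g p := by
    intro p q hpq
    rcases eq_or_lt_of_le hpq with rfl | hlt
    · exact le_refl _
    by_cases hcase : S p + w p ≤ C
    · rw [gone p hcase]; exact hg1 q
    · have : C ≤ S q := le_trans (le_of_not_ge hcase) (hSstep p q hlt)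
      rw [gzero q this]; exact hg0 p
  have hpartial : ∀ n : ℕ, ∑ q ∈ range n, w q * g q = min C (S n) := by
    intro n
    induction n with
    | zero => simp [hSdef, min_eq_right hC]
    | succ n ih =>
      rw [Finset.sum_range_succ, ih, hSsucc]
      rcases le_or_gt C (S n) with h | h
      · rw [gzero n h, min_eq_left h, min_eq_left (by linarith [(hw n).le] : C ≤ S n + w n)]
        ring
      · rcases le_or_gt C (S n + w n) with h2 | h2
        · have hx0 : (0:ℝ) ≤ (C - S n) / w n := div_nonneg (by linarith) (hw n).le
          have hx1 : (C - S n) / w n ≤ 1 := (div_le_one (hw n)).2 (by linarith)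
          have : g n = (C - S n) / w n := by
            simp only [hgdef]
            rw [min_eq_right hx1, max_eq_right hx0]
          rw [this, min_eq_right h.le, min_eq_left h2, mul_div_cancel₀ _ (hw n).ne']
          ring
        · rw [gone n (by linarith), min_eq_right h.le, min_eq_right h2.le]
          ring
  refine ⟨g, hg0, hg1, ganti, ?_, ?_, ?_⟩
  · rw [hpartial M]; exact min_le_left _ _
  · -- optimality
    intro μ hμ0 hμ1 hbud
    by_cases hT : ∀ q < M, g q = 1
    · refine Finset.sum_le_sum fun q hq => ?_
      rw [hT q (Finset.mem_range.1 hq)]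
      exact mul_le_mul_of_nonneg_left (by simpa using hμ1 q) (hv q).le
    · push_neg at hT
      obtain ⟨t0, ht0M, ht0⟩ := hT
      -- take least such t
      have hex : ∃ t, t < M ∧ g t ≠ 1 := ⟨t0, ht0M, ht0⟩
      classical
      set t := Nat.find hex with htdef
      obtain ⟨htM, htne⟩ := Nat.find_spec hex
      have hlt1 : ∀ q < t, g q = 1 := by
        intro q hq
        have := Nat.find_min hex hq
        push_neg at this
        exact this (lt_trans hq htM)
      have hCt : C < S t + w t := by
        by_contra hc
        exact htne (gone t (le_of_not_gt hc))
      have hgt0 : ∀ q, t < q → g q = 0 := fun q hq => gzero q (le_trans hCt.le (hSstep t q hq))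
      have hSt : S t ≤ C := by
        have : ∑ q ∈ range t, w q * g q = S t := by
          rw [hSdef]
          exact Finset.sum_congr rfl fun q hq => by
            rw [hlt1 q (Finset.mem_range.1 hq)]; ring
        have h2 := hpartial t
        rw [this] at h2
        exact min_eq_right_iff.1 h2.symm
      have hsum_eq : ∑ q ∈ range M, w q * g q = C := by
        rw [hpartial M]
        have : S t + w t ≤ S M := by
          rw [← hSsucc]; exact hSmono _ _ htM
        exact min_eq_left (by linarith)
      set rt := v t / w t with hrt
      have hrtpos : 0 < rt := div_pos (hv t) (hw t)
      have key : ∀ q ∈ range M,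
          v q * μ q - v q * g q ≤ rt * (w q * μ q - w q * g q) := by
        intro q hq
        have hqM := Finset.mem_range.1 hq
        have hne : w q ≠ 0 := (hw q).ne'
        rcases lt_trichotomy q t with hqt | rfl | htq
        · have hg : g q = 1 := hlt1 q hqt
          have hfac : w q * μ q - w q * g q ≤ 0 := by
            rw [hg]; nlinarith [hμ1 q, (hw q).le, hw q]
          have hrq : rt ≤ v q / w q := hr q t hqt.le htM
          calc v q * μ q - v q * g q = (v q / w q) * (w q * μ q - w q * g q) := by
                field_simp
            _ ≤ rt * (w q * μ q - w q * g q) := mul_le_mul_of_nonpos_right hrq hfac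
        · refine le_of_eq ?_
          have hwt : rt * w t = v t := div_mul_cancel₀ _ (hw t).ne'
          rw [← hwt]; ring
        · have hg : g q = 0 := hgt0 q htq
          have hfac : 0 ≤ w q * μ q - w q * g q := by
            rw [hg]; nlinarith [hμ0 q, (hw q).le]
          have hrq : v q / w q ≤ rt := hr t q htq.le hqM
          calc v q * μ q - v q * g q = (v q / w q) * (w q * μ q - w q * g q) := by
                field_simp
            _ ≤ rt * (w q * μ q - w q * g q) := mul_le_mul_of_nonneg_right hrq hfac
      have hsum := Finset.sum_le_sum key
      rw [Finset.sum_sub_distrib] at hsum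
      have h2 : ∑ q ∈ range M, rt * (w q * μ q - w q * g q)
          = rt * (∑ q ∈ range M, w q * μ q - ∑ q ∈ range M, w q * g q) := by
        rw [← Finset.sum_sub_distrib, Finset.mul_sum]
      rw [h2, hsum_eq] at hsum
      have hnn : (0:ℝ) ≤ rt * (C - ∑ q ∈ range M, w q * μ q) :=
        mul_nonneg hrtpos.le (by linarith)
      linarith
  · -- uniqueness
    intro p q hp hq
    by_contra hne
    rcases lt_trichotomy p q with h | h | h
    · obtain ⟨h1, h2⟩ := gfrac p hp
      have : C ≤ S q := le_trans h2.le (hSstep p q h)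
      exact hq (Or.inl (gzero q this))
    · exact hne h
    · obtain ⟨h1, h2⟩ := gfrac q hq
      have : C ≤ S p := le_trans h2.le (hSstep q p h)
      exact hp (Or.inl (gzero p this))

/-- **Theorem 4.** For the single-cache STTL problem with hazard ratios `F_{i,j}/A_{i,j}`
nonincreasing in `j`, the maximum of the cache download rate `R(μ)` over the feasible set is
attained by a policy whose entries are all `0` or `1` except for at most one pair `(i, j)`. -/
theorem stmt_14 (N K : ℕ) (ω s : Fin N → ℝ) (F A : Fin N → Fin (K + 1) → ℝ) (C : ℝ)
    (hω : ∀ i, 0 < ω i) (hs : ∀ i, 0 < s i)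
    (hF : ∀ i j, 0 < F i j) (hA : ∀ i j, 0 < A i j) (hC : 0 ≤ C)
    (hhaz : ∀ i, Antitone fun j => F i j / A i j) :
    ∃ μstar : Fin N → Fin (K + 1) → ℝ,
      (∑ i, ω i * s i * ∑ j, μstar i j * A i j ≤ C ∧ (∀ i, μstar i 0 ≤ 1) ∧
        (∀ i, Antitone (μstar i)) ∧ (∀ i, 0 ≤ μstar i (Fin.last K))) ∧
      (∀ μ : Fin N → Fin (K + 1) → ℝ,
        (∑ i, ω i * s i * ∑ j, μ i j * A i j ≤ C ∧ (∀ i, μ i 0 ≤ 1) ∧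
          (∀ i, Antitone (μ i)) ∧ (∀ i, 0 ≤ μ i (Fin.last K))) →
        ∑ i, ω i * s i * ∑ j, μ i j * F i j
          ≤ ∑ i, ω i * s i * ∑ j, μstar i j * F i j) ∧
      (∀ p q : Fin N × Fin (K + 1),
        ¬(μstar p.1 p.2 = 0 ∨ μstar p.1 p.2 = 1) →
        ¬(μstar q.1 q.2 = 0 ∨ μstar q.1 q.2 = 1) → p = q) := by
  classical
  set M := N * (K + 1) with hM
  set E : Fin N × Fin (K + 1) ≃ Fin M := finProdFinEquiv with hE
  set r0 : Fin M → ℝ :=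
    fun n => F (E.symm n).1 (E.symm n).2 / A (E.symm n).1 (E.symm n).2 with hr0
  set f : Fin M → ℝ := fun n => -r0 n with hf
  set σ : Equiv.Perm (Fin M) := Tuple.sort f with hσ
  set e : Fin M ≃ Fin N × Fin (K + 1) := σ.trans E.symm with he
  have hesymm : ∀ p, e.symm p = σ.symm (E p) := by
    intro p; simp [he]
  have happ : ∀ m, e m = E.symm (σ m) := by
    intro m; simp [he]
  -- stability and monotonicity of sort
  have hmon : Monotone (f ∘ σ) := hσ ▸ Tuple.monotone_sort f
  have hstab : ∀ i j : Fin M, i < j → f (σ i) = f (σ j) → σ i < σ j :=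
    ((Tuple.eq_sort_iff).1 hσ).2
  have posLe : ∀ a b : Fin M, a < b → f a ≤ f b → σ.symm a < σ.symm b := by
    intro a b hab hfab
    rcases lt_trichotomy (σ.symm a) (σ.symm b) with h | h | h
    · exact h
    · exfalso
      have : a = b := by
        have := congrArg σ h
        rwa [σ.apply_symm_apply, σ.apply_symm_apply] at this
      exact hab.ne this
    · exfalso
      have h1 : f (σ (σ.symm b)) ≤ f (σ (σ.symm a)) := hmon h.le
      rw [σ.apply_symm_apply, σ.apply_symm_apply] at h1
      have heqf : f b = f a := le_antisymm h1 hfab |>.symm ▸ rfl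
      have heqf' : f b = f a := le_antisymm h1 hfab
      have := hstab _ _ h (by rw [σ.apply_symm_apply, σ.apply_symm_apply]; exact heqf')
      rw [σ.apply_symm_apply, σ.apply_symm_apply] at this
      exact absurd hab (not_lt.2 this.le)
  have hr0E : ∀ (i : Fin N) (j : Fin (K + 1)), r0 (E (i, j)) = F i j / A i j := by
    intro i j; simp [hr0]
  have hEfst : ∀ (i : Fin N) (j j' : Fin (K + 1)), j < j' → E (i, j) < E (i, j') := by
    intro i j j' hjj'
    simp only [hE, Fin.lt_def]
    simp [finProdFinEquiv]
    omega
  have hposmono : ∀ (i : Fin N) (j j' : Fin (K + 1)), j ≤ j' →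
      e.symm (i, j) ≤ e.symm (i, j') := by
    intro i j j' hjj'
    rcases eq_or_lt_of_le hjj' with rfl | hlt
    · exact le_refl _
    rw [hesymm, hesymm]
    refine (posLe _ _ (hEfst i j j' hlt) ?_).le
    simp only [hf, hr0E]
    exact neg_le_neg (hhaz i hjj')
  -- knapsack data
  have hwpos : ∀ n : ℕ, 0 < (if hn : n < M then
      ω (e ⟨n, hn⟩).1 * s (e ⟨n, hn⟩).1 * A (e ⟨n, hn⟩).1 (e ⟨n, hn⟩).2 else 1) := by
    intro n; split_ifs with hn
    · exact mul_pos (mul_pos (hω _) (hs _)) (hA _ _)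
    · exact one_pos
  have hvpos : ∀ n : ℕ, 0 < (if hn : n < M then
      ω (e ⟨n, hn⟩).1 * s (e ⟨n, hn⟩).1 * F (e ⟨n, hn⟩).1 (e ⟨n, hn⟩).2 else 1) := by
    intro n; split_ifs with hn
    · exact mul_pos (mul_pos (hω _) (hs _)) (hF _ _)
    · exact one_pos
  have hratio : ∀ (n : ℕ) (hn : n < M),
      (if hn : n < M then
        ω (e ⟨n, hn⟩).1 * s (e ⟨n, hn⟩).1 * F (e ⟨n, hn⟩).1 (e ⟨n, hn⟩).2 else 1) /
      (if hn : n < M then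
        ω (e ⟨n, hn⟩).1 * s (e ⟨n, hn⟩).1 * A (e ⟨n, hn⟩).1 (e ⟨n, hn⟩).2 else 1)
      = r0 (σ ⟨n, hn⟩) := by
    intro n hn
    rw [dif_pos hn, dif_pos hn,
      mul_div_mul_left _ _ (ne_of_gt (mul_pos (hω _) (hs _)))]
    rw [hr0]
    simp [happ]
  have hrcond : ∀ p q : ℕ, p ≤ q → q < M →
      (if hn : q < M then
        ω (e ⟨q, hn⟩).1 * s (e ⟨q, hn⟩).1 * F (e ⟨q, hn⟩).1 (e ⟨q, hn⟩).2 else 1) /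
      (if hn : q < M then
        ω (e ⟨q, hn⟩).1 * s (e ⟨q, hn⟩).1 * A (e ⟨q, hn⟩).1 (e ⟨q, hn⟩).2 else 1) ≤
      (if hn : p < M then
        ω (e ⟨p, hn⟩).1 * s (e ⟨p, hn⟩).1 * F (e ⟨p, hn⟩).1 (e ⟨p, hn⟩).2 else 1) /
      (if hn : p < M then
        ω (e ⟨p, hn⟩).1 * s (e ⟨p, hn⟩).1 * A (e ⟨p, hn⟩).1 (e ⟨p, hn⟩).2 else 1) := by
    intro p q hpq hqM
    have hpM : p < M := lt_of_le_of_lt hpq hqM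
    rw [hratio p hpM, hratio q hqM]
    have := hmon (show (⟨p, hpM⟩ : Fin M) ≤ ⟨q, hqM⟩ from hpq)
    simp only [Function.comp, hf] at this
    linarith
  obtain ⟨g, hg0, hg1, ganti, hbud, hopt, huniq⟩ :=
    knap_sttl M
      (fun n => if hn : n < M then
        ω (e ⟨n, hn⟩).1 * s (e ⟨n, hn⟩).1 * A (e ⟨n, hn⟩).1 (e ⟨n, hn⟩).2 else 1)
      (fun n => if hn : n < M then
        ω (e ⟨n, hn⟩).1 * s (e ⟨n, hn⟩).1 * F (e ⟨n, hn⟩).1 (e ⟨n, hn⟩).2 else 1)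
      C hC hwpos hvpos hrcond
  -- conversion between the two sum formats
  have hconv : ∀ (h : Fin N → Fin (K + 1) → ℝ) (x : ℕ → ℝ),
      (∑ n ∈ Finset.range M,
        (if hn : n < M then
          ω (e ⟨n, hn⟩).1 * s (e ⟨n, hn⟩).1 * h (e ⟨n, hn⟩).1 (e ⟨n, hn⟩).2 else 1) * x n)
        = ∑ i, ω i * s i * ∑ j, x ((e.symm (i, j) : Fin M) : ℕ) * h i j := by
    intro h x
    have step1 : (∑ n ∈ Finset.range M,
        (if hn : n < M then
          ω (e ⟨n, hn⟩).1 * s (e ⟨n, hn⟩).1 * h (e ⟨n, hn⟩).1 (e ⟨n, hn⟩).2 else 1) * x n)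
        = ∑ m : Fin M,
            (ω (e m).1 * s (e m).1 * h (e m).1 (e m).2) * x (m : ℕ) := by
      rw [← Fin.sum_univ_eq_sum_range (fun n =>
        (if hn : n < M then
          ω (e ⟨n, hn⟩).1 * s (e ⟨n, hn⟩).1 * h (e ⟨n, hn⟩).1 (e ⟨n, hn⟩).2 else 1) * x n) M]
      refine Finset.sum_congr rfl fun m _ => ?_
      rw [dif_pos m.isLt]
    rw [step1]
    have step2 : (∑ m : Fin M,
        (ω (e m).1 * s (e m).1 * h (e m).1 (e m).2) * x (m : ℕ))
        = ∑ p : Fin N × Fin (K + 1),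
            (ω p.1 * s p.1 * h p.1 p.2) * x ((e.symm p : Fin M) : ℕ) := by
      rw [← Equiv.sum_comp e (fun p =>
        (ω p.1 * s p.1 * h p.1 p.2) * x ((e.symm p : Fin M) : ℕ))]
      refine Finset.sum_congr rfl fun m _ => ?_
      rw [Equiv.symm_apply_apply]
    rw [step2, Fintype.sum_prod_type]
    refine Finset.sum_congr rfl fun i _ => ?_
    rw [Finset.mul_sum]
    refine Finset.sum_congr rfl fun j _ => ?_
    ring
  refine ⟨fun i j => g ((e.symm (i, j) : Fin M) : ℕ), ⟨?_, ?_, ?_, ?_⟩, ?_, ?_⟩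
  · -- budget
    rw [← hconv A g]
    exact hbud
  · intro i; exact hg1 _
  · intro i j j' hjj'
    exact ganti _ _ (hposmono i j j' hjj')
  · intro i; exact hg0 _
  · -- optimality
    intro μ ⟨hbudμ, hμ1, hμanti, hμ0⟩
    set xμ : ℕ → ℝ := fun n => if hn : n < M then μ (e ⟨n, hn⟩).1 (e ⟨n, hn⟩).2 else 0
      with hxμ
    have hx0 : ∀ n, 0 ≤ xμ n := by
      intro n
      simp only [hxμ]
      split_ifs with hn
      · exact le_trans (hμ0 _) (hμanti _ (Fin.le_last _))
      · exact le_refl 0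
    have hx1 : ∀ n, xμ n ≤ 1 := by
      intro n
      simp only [hxμ]
      split_ifs with hn
      · exact le_trans (hμanti _ (Fin.zero_le _)) (hμ1 _)
      · exact zero_le_one
    have hxval : ∀ p : Fin N × Fin (K + 1), xμ ((e.symm p : Fin M) : ℕ) = μ p.1 p.2 := by
      intro p
      simp only [hxμ]
      rw [dif_pos (e.symm p).isLt]
      congr 1 <;> rw [Fin.eta, Equiv.apply_symm_apply]
    have hbudx : ∑ n ∈ Finset.range M,
        (if hn : n < M then
          ω (e ⟨n, hn⟩).1 * s (e ⟨n, hn⟩).1 * A (e ⟨n, hn⟩).1 (e ⟨n, hn⟩).2 else 1) * xμ n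
        ≤ C := by
      rw [hconv A xμ]
      calc ∑ i, ω i * s i * ∑ j, xμ ((e.symm (i, j) : Fin M) : ℕ) * A i j
          = ∑ i, ω i * s i * ∑ j, μ i j * A i j := by
            refine Finset.sum_congr rfl fun i _ => ?_
            congr 1
            refine Finset.sum_congr rfl fun j _ => ?_
            rw [hxval (i, j)]
        _ ≤ C := hbudμ
    have := hopt xμ hx0 hx1 hbudx
    rw [hconv F xμ, hconv F g] at this
    calc ∑ i, ω i * s i * ∑ j, μ i j * F i j
        = ∑ i, ω i * s i * ∑ j, xμ ((e.symm (i, j) : Fin M) : ℕ) * F i j := by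
          refine Finset.sum_congr rfl fun i _ => ?_
          congr 1
          refine Finset.sum_congr rfl fun j _ => ?_
          rw [hxval (i, j)]
      _ ≤ _ := this
  · -- uniqueness of fractional entry
    intro p q hp hq
    have := huniq _ _ hp hq
    have h2 : e.symm (p.1, p.2) = e.symm (q.1, q.2) := Fin.val_injective this
    have h3 : (p.1, p.2) = (q.1, q.2) := e.symm.injective h2
    calc p = (p.1, p.2) := rfl
      _ = (q.1, q.2) := h3
      _ = q := rfl
end
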